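/- Let C : (Fin n → ι) → ι → k be totally antisymmetric structure constants satisfying the generalized Jacobi identity, let p : ι → Fin 2 be a degree map with the submultialgebra condition (C (i₁,…,iₙ) t = 0 whenever p(i_l) = 0 for all l and p(t) = 1), and let N : Fin 2 → ℕ satisfy N 1 = N 0 or N 1 = N 0 + 1. Let W = {(i,α) : ι × ℕ | p(i) ≤ α and α ≤ N (p i)}, and define truncated expanded structure constants on W by C̃ ((i₁,β₁),…,(iₙ,βₙ)) (t,α) = C (i₁,…,iₙ) t if β₁+⋯+βₙ = α, and 0 otherwise. Then C̃ is totally antisymmetric under simultaneous permutation (with sign) of its n lower index pairs and satisfies the generalized Jacobi identity on the finite index set W (with the intermediate summation index ranging over W); hence it determines a higher-order Lie algebra 𝔊(N₀,N₁) of order n. -/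

import Mathlib

noncomputable section

/-- Total antisymmetry of structure constants. -/
def IsTotallyAntisymmetric {k ι : Type*} [CommRing k] {n : ℕ}
    (C : (Fin n → ι) → ι → k) : Prop :=
  ∀ (σ : Equiv.Perm (Fin n)) (i : Fin n → ι) (t : ι),
    C (i ∘ σ) t = (Equiv.Perm.sign σ : ℤ) • C i t

/-- The generalized Jacobi identity. -/
def SatisfiesGJI {k ι : Type*} [CommRing k] [Fintype ι] {n : ℕ}
    (C : (Fin n → ι) → ι → k) : Prop :=
  ∀ (j : Fin (2 * n - 1) → ι) (t : ι),
    (∑ σ : Equiv.Perm (Fin (2 * n - 1)),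
      (Equiv.Perm.sign σ : ℤ) •
        ∑ ρ : ι,
          C (fun l : Fin n => j (σ ⟨(l : ℕ), lt_of_lt_of_le l.isLt (by omega)⟩)) ρ *
          C (fun l : Fin n =>
              if hl : (l : ℕ) = 0 then ρ
              else j (σ ⟨n + (l : ℕ) - 1, by have := l.isLt; omega⟩)) t) = 0

/-- The truncated index set `W = {(i,α) : ι × ℕ | p i ≤ α ∧ α ≤ N (p i)}`. -/
abbrev TruncIdx {ι : Type*} (p : ι → Fin 2) (N : Fin 2 → ℕ) : Type _ :=
  {x : ι × ℕ // (p x.1 : ℕ) ≤ x.2 ∧ x.2 ≤ N (p x.1)}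

/-- `W` is a finite set. -/
instance TruncIdx.instFintype {ι : Type*} [Fintype ι] (p : ι → Fin 2) (N : Fin 2 → ℕ) :
    Fintype (TruncIdx p N) := by
  apply Set.Finite.fintype (s := {x : ι × ℕ | (p x.1 : ℕ) ≤ x.2 ∧ x.2 ≤ N (p x.1)})
  apply Set.Finite.subset (Set.finite_univ.prod (Set.finite_Iic (max (N 0) (N 1))))
  rintro ⟨a, m⟩ ⟨-, h2⟩
  refine ⟨Set.mem_univ _, ?_⟩
  have hle : N (p a) ≤ max (N 0) (N 1) := by
    have : p a = 0 ∨ p a = 1 := by omega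
    rcases this with h | h <;> rw [h]
    · exact le_max_left _ _
    · exact le_max_right _ _
  exact le_trans h2 hle

/-- The truncated expanded structure constants on `W`:
`C̃ ((i₁,β₁),…,(iₙ,βₙ)) (t,α) = C (i₁,…,iₙ) t` if `β₁+⋯+βₙ = α`, and `0` otherwise. -/
def truncExpandedC {k ι : Type*} [CommRing k] {n : ℕ} (C : (Fin n → ι) → ι → k)
    (p : ι → Fin 2) (N : Fin 2 → ℕ) :
    (Fin n → TruncIdx p N) → TruncIdx p N → k :=
  fun i t =>
    if (∑ l, ((i l : ι × ℕ)).2) = ((t : ι × ℕ)).2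
    then C (fun l => ((i l : ι × ℕ)).1) ((t : ι × ℕ)).1 else 0

/-! Since degrees add up, `C̃` is `C` restricted to degree-preserving index tuples, which gives
antisymmetry at once. In the Jacobi sum the intermediate index is forced to be `(r, β₁+⋯+βₙ)`,
so the expanded Jacobi sum is that of `C` when the total degree of the lower indices is the
degree of `t`, and zero otherwise. The only obstruction is that `(r, β₁+⋯+βₙ)` may lie outside
`W`; such terms vanish anyway. If `β₁+⋯+βₙ < p r`, all first `n` indices have degree `0`, hence
lie in `V₀`, while `r ∈ V₁`. If `β₁+⋯+βₙ > N (p r)`, then `N₀ ≤ N₁ ≤ N₀ + 1` forces `r ∈ V₀`,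
degree `0` (so `V₀`) for the remaining lower indices, and `t ∈ V₁`. -/

open Finset

section Sums

variable {M : Type*} [AddCommMonoid M]

lemma Fin.sum_ite_val_eq_zero {n : ℕ} (hn : 0 < n) (x : M) (g : Fin n → M) :
    ∑ l : Fin n, (if (l : ℕ) = 0 then x else g l)
      = x + ∑ l : Fin n, (if (l : ℕ) = 0 then 0 else g l) := by
  obtain ⟨m, rfl⟩ := Nat.exists_eq_add_one_of_ne_zero hn.ne'
  simp [Fin.sum_univ_succ]

lemma sum_subtype_ite_snd_eq {ι β : Type*} [Fintype ι] [DecidableEq β] {P : ι × β → Prop}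
    [Fintype {x // P x}] (a : β) (F : ι → M) (hF : ∀ r, ¬ P (r, a) → F r = 0) :
    ∑ x : {x // P x}, (if a = x.1.2 then F x.1.1 else 0) = ∑ r, F r := by
  classical
  rw [← Finset.sum_filter, ← Finset.sum_filter_of_ne (p := fun r => P (r, a))
    (fun r _ hr => by_contra fun h => hr (hF r h))]
  refine Finset.sum_bij' (fun x _ => x.1.1) (fun r hr => ⟨(r, a), (mem_filter.1 hr).2⟩)
    (fun x hx => ?_) (by simp) (fun x hx => ?_) (fun _ _ => rfl) (fun _ _ => rfl)
  · rw [mem_filter] at hx ⊢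
    exact ⟨mem_univ _, hx.2 ▸ x.2⟩
  · exact Subtype.ext (Prod.ext rfl (mem_filter.1 hx).2)

lemma sum_head_add_sum_tail {n : ℕ} (hn : 0 < n) (f : Fin (2 * n - 1) → M) :
    ∑ l : Fin n, f ⟨l, by omega⟩
      + ∑ l : Fin n, (if (l : ℕ) = 0 then 0 else f ⟨n + l - 1, by omega⟩) = ∑ l, f l := by
  obtain ⟨m, rfl⟩ := Nat.exists_eq_add_one_of_ne_zero hn.ne'
  rw [← Fin.sum_congr' f (show m + 1 + m = 2 * (m + 1) - 1 by omega),
    Fin.sum_univ_add (a := m + 1)]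
  congr 1
  rw [Fin.sum_univ_succ]
  simp only [Fin.coe_ofNat_eq_mod, Nat.zero_mod, ↓reduceIte, Fin.val_succ, Nat.add_eq_zero_iff,
    one_ne_zero, and_false, Nat.add_succ_sub_one, zero_add]
  rfl

end Sums

namespace TruncIdx

variable {ι : Type*} {p : ι → Fin 2} {N : Fin 2 → ℕ}

lemma p_eq_zero_of_snd_eq_zero (w : TruncIdx p N) (h : w.1.2 = 0) : p w.1.1 = 0 := by
  have := w.2.1
  omega

lemma snd_le_N_one (hN : N 0 ≤ N 1) (w : TruncIdx p N) : w.1.2 ≤ N 1 :=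
  w.2.2.trans (Fin.forall_fin_two (p := fun q => N q ≤ N 1) |>.2 ⟨hN, le_rfl⟩ _)

end TruncIdx

lemma IsTotallyAntisymmetric.truncExpandedC {k ι : Type*} [CommRing k] {n : ℕ}
    {C : (Fin n → ι) → ι → k} (hA : IsTotallyAntisymmetric C) (p : ι → Fin 2) (N : Fin 2 → ℕ) :
    IsTotallyAntisymmetric (truncExpandedC C p N) := by
  intro σ i t
  simp only [_root_.truncExpandedC, Function.comp_apply, Equiv.sum_comp σ fun l => (i l).1.2]
  split_ifs
  · exact hA σ (fun l => (i l).1.1) t.1.1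
  · simp

section Jacobi

variable {k ι : Type*} [CommRing k] {n : ℕ} {C : (Fin n → ι) → ι → k}
  {p : ι → Fin 2} {N : Fin 2 → ℕ}

def jacobiTerm [Fintype ι] (C : (Fin n → ι) → ι → k) (j : Fin (2 * n - 1) → ι) (t : ι) : k :=
  ∑ ρ : ι, C (fun l => j ⟨l, by omega⟩) ρ *
    C (fun l => if (l : ℕ) = 0 then ρ else j ⟨n + l - 1, by omega⟩) t

lemma satisfiesGJI_iff_jacobiTerm [Fintype ι] :
    SatisfiesGJI C ↔ ∀ j t, ∑ σ : Equiv.Perm (Fin (2 * n - 1)),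
      (Equiv.Perm.sign σ : ℤ) • jacobiTerm C (j ∘ σ) t = 0 :=
  Iff.rfl

lemma mul_eq_zero_of_not_mem_truncIdx
    (hsub : ∀ (i : Fin n → ι) (t : ι), (∀ l, p (i l) = 0) → p t = 1 → C i t = 0)
    (hN : N 1 = N 0 ∨ N 1 = N 0 + 1) {g h : Fin n → TruncIdx p N} {t : TruncIdx p N} {r : ι}
    (hdeg : ∑ l, (g l).1.2 + ∑ l : Fin n, (if (l : ℕ) = 0 then 0 else (h l).1.2) = t.1.2)
    (hr : ¬ ((p r : ℕ) ≤ ∑ l, (g l).1.2 ∧ ∑ l, (g l).1.2 ≤ N (p r))) :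
    C (fun l => (g l).1.1) r * C (fun l => if (l : ℕ) = 0 then r else (h l).1.1) t.1.1 = 0 := by
  have ht : t.1.2 ≤ N 1 := t.snd_le_N_one (by omega)
  rcases (by omega : p r = 0 ∨ p r = 1) with hr0 | hr1
  · have hA : N 0 < ∑ l, (g l).1.2 := by simpa [hr0] using hr
    have hB : ∑ l : Fin n, (if (l : ℕ) = 0 then 0 else (h l).1.2) = 0 := by omega
    have hpt : p t.1.1 = 1 := by
      by_contra hpt
      have := (show p t.1.1 = 0 by omega) ▸ t.2.2
      omega
    refine mul_eq_zero_of_right _ (hsub _ _ (fun l => ?_) hpt)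
    split_ifs with hl
    · exact hr0
    · refine (h l).p_eq_zero_of_snd_eq_zero ?_
      simpa [hl] using Finset.sum_eq_zero_iff.1 hB l (mem_univ _)
  · have hA : ∑ l, (g l).1.2 = 0 := by
      simp only [hr1] at hr
      omega
    exact mul_eq_zero_of_left (hsub _ _ (fun l => (g l).p_eq_zero_of_snd_eq_zero
      (Finset.sum_eq_zero_iff.1 hA l (mem_univ _))) hr1) _

lemma sum_truncExpandedC_mul [Fintype ι] (hn : 0 < n)
    (hsub : ∀ (i : Fin n → ι) (t : ι), (∀ l, p (i l) = 0) → p t = 1 → C i t = 0)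
    (hN : N 1 = N 0 ∨ N 1 = N 0 + 1) (g h : Fin n → TruncIdx p N) (t : TruncIdx p N) :
    ∑ ρ, truncExpandedC C p N g ρ *
        truncExpandedC C p N (fun l => if (l : ℕ) = 0 then ρ else h l) t =
      if ∑ l, (g l).1.2 + ∑ l : Fin n, (if (l : ℕ) = 0 then 0 else (h l).1.2) = t.1.2 then
        ∑ r, C (fun l => (g l).1.1) r * C (fun l => if (l : ℕ) = 0 then r else (h l).1.1) t.1.1
      else 0 := by
  have hsnd (ρ : TruncIdx p N) : ∑ l : Fin n, (if (l : ℕ) = 0 then ρ else h l).1.2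
      = ρ.1.2 + ∑ l : Fin n, (if (l : ℕ) = 0 then 0 else (h l).1.2) := by
    simp only [apply_ite (fun w : TruncIdx p N => w.1.2)]
    exact Fin.sum_ite_val_eq_zero hn _ _
  simp only [truncExpandedC, hsnd, apply_ite (fun w : TruncIdx p N => w.1.1)]
  split_ifs with htot
  · rw [← sum_subtype_ite_snd_eq (P := fun x : ι × ℕ => (p x.1 : ℕ) ≤ x.2 ∧ x.2 ≤ N (p x.1))
      (∑ l, (g l).1.2) _
      fun r hr => mul_eq_zero_of_not_mem_truncIdx hsub hN htot hr]
    refine sum_congr rfl fun ρ _ => ?_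
    by_cases hρ : ∑ l, (g l).1.2 = ρ.1.2
    · rw [if_pos hρ, if_pos hρ, if_pos (by rwa [← hρ])]
    · rw [if_neg hρ, if_neg hρ, zero_mul]
  · refine sum_eq_zero fun ρ _ => ?_
    by_cases hρ : ∑ l, (g l).1.2 = ρ.1.2
    · rw [if_pos hρ, if_neg (by rwa [← hρ]), mul_zero]
    · rw [if_neg hρ, zero_mul]

lemma jacobiTerm_truncExpandedC [Fintype ι] (hn : 0 < n)
    (hsub : ∀ (i : Fin n → ι) (t : ι), (∀ l, p (i l) = 0) → p t = 1 → C i t = 0)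
    (hN : N 1 = N 0 ∨ N 1 = N 0 + 1) (j : Fin (2 * n - 1) → TruncIdx p N) (t : TruncIdx p N) :
    jacobiTerm (truncExpandedC C p N) j t =
      if ∑ l, (j l).1.2 = t.1.2 then jacobiTerm C (fun l => (j l).1.1) t.1.1 else 0 := by
  rw [jacobiTerm, sum_truncExpandedC_mul hn hsub hN, sum_head_add_sum_tail hn fun l => (j l).1.2]
  rfl

lemma SatisfiesGJI.truncExpandedC [Fintype ι] (hn : 0 < n) (hJ : SatisfiesGJI C)
    (hsub : ∀ (i : Fin n → ι) (t : ι), (∀ l, p (i l) = 0) → p t = 1 → C i t = 0)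
    (hN : N 1 = N 0 ∨ N 1 = N 0 + 1) : SatisfiesGJI (truncExpandedC C p N) := by
  rw [satisfiesGJI_iff_jacobiTerm] at hJ ⊢
  intro j t
  have hdeg (σ : Equiv.Perm (Fin (2 * n - 1))) : ∑ l, (j (σ l)).1.2 = ∑ l, (j l).1.2 :=
    Equiv.sum_comp σ fun l => (j l).1.2
  simp only [jacobiTerm_truncExpandedC hn hsub hN, Function.comp_apply, hdeg]
  split_ifs
  · exact hJ (fun l => (j l).1.1) t.1.1
  · simp

end Jacobi

/-- If `V₀` is a submultialgebra and `N 1 = N 0` or `N 1 = N 0 + 1`, the truncated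
expanded structure constants are totally antisymmetric and satisfy the generalized
Jacobi identity on the finite index set `W`; hence they determine the higher-order
Lie algebra `𝔊(N₀,N₁)` of order `n`. -/
theorem truncExpandedC_isMultialgebra {k ι : Type*} [CommRing k] [Fintype ι] {n : ℕ}
    (hn : 2 ≤ n) (C : (Fin n → ι) → ι → k)
    (hA : IsTotallyAntisymmetric C) (hJ : SatisfiesGJI C)
    (p : ι → Fin 2)
    (hsub : ∀ (i : Fin n → ι) (t : ι), (∀ l, p (i l) = 0) → p t = 1 → C i t = 0)
    (N : Fin 2 → ℕ) (hN : N 1 = N 0 ∨ N 1 = N 0 + 1) :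
    IsTotallyAntisymmetric (truncExpandedC C p N) ∧
    SatisfiesGJI (truncExpandedC C p N) :=
  ⟨hA.truncExpandedC p N, hJ.truncExpandedC (by omega) hsub hN⟩
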